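/- Let K⋆ satisfy R K⋆ = Bᵀ S11 (A − BK⋆) with S11, R symmetric, and suppose ρ(A − BK⋆) < 1 and ρ(A − LC) < 1. If S12 satisfies S12 = −(K⋆)ᵀRK⋆ + (A−BK⋆)ᵀ S11 B K⋆ + (A−BK⋆)ᵀ S12 (A−LC), then S12 = 0. -/

import Mathlib

/-!
Transposing the gain equation gives `K⋆ᵀ R = (A - B K⋆)ᵀ S11 B`, so the two inhomogeneous terms
cancel and `S12` solves the homogeneous Stein equation `X = Mᵀ X N` with `M = A - B K⋆` and
`N = A - L C`. Iterating, `X = (Mᵀ)ᵏ X Nᵏ` for every `k`; after complexification, Gelfand's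
formula shows that the powers of a matrix of spectral radius below one tend to zero, so `X = 0`.
-/

open Matrix

/-- Spectral radius of a real square matrix: supremum of the moduli of the
complex eigenvalues (roots of the characteristic polynomial of the complexification). -/
noncomputable def specRad {ι : Type} [Fintype ι] [DecidableEq ι] (M : Matrix ι ι ℝ) : ℝ :=
  sSup {r : ℝ | ∃ μ : ℂ, (M.map (Complex.ofReal ·)).charpoly.IsRoot μ ∧ r = ‖μ‖}

open Filter Topology ENNReal

theorem tendsto_pow_atTop_nhds_zero_of_spectralRadius_lt_one {A : Type*} [NormedRing A]
    [NormedAlgebra ℂ A] [CompleteSpace A] {a : A} (h : spectralRadius ℂ a < 1) :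
    Tendsto (a ^ ·) atTop (𝓝 0) := by
  obtain ⟨c, hac, hc1⟩ := ENNReal.lt_iff_exists_nnreal_btwn.mp h
  have hc1' : c < 1 := by exact_mod_cast hc1
  have hroot : ∀ᶠ k : ℕ in atTop, (‖a ^ k‖₊ : ℝ≥0∞) ^ (1 / k : ℝ) < c :=
    (spectrum.pow_nnnorm_pow_one_div_tendsto_nhds_spectralRadius a).eventually_lt_const hac
  have hbound : ∀ᶠ k : ℕ in atTop, ‖a ^ k‖ ≤ (c : ℝ) ^ k := by
    filter_upwards [hroot, eventually_ge_atTop 1] with k hk hk1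
    have hkpos : (0 : ℝ) < k := by exact_mod_cast hk1
    rw [one_div, ← ENNReal.coe_rpow_of_nonneg _ (by positivity), ENNReal.coe_lt_coe,
      NNReal.rpow_inv_lt_iff hkpos, NNReal.rpow_natCast] at hk
    exact_mod_cast hk.le
  exact squeeze_zero_norm' hbound (tendsto_pow_atTop_nhds_zero_of_lt_one c.2 hc1')

theorem eq_pow_mul_mul_pow_of_eq_mul_mul {ι κ α : Type*} [Fintype ι] [DecidableEq ι]
    [Fintype κ] [DecidableEq κ] [Semiring α] {P : Matrix ι ι α} {Q : Matrix κ κ α}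
    {X : Matrix ι κ α} (hX : X = P * X * Q) (k : ℕ) : X = P ^ k * X * Q ^ k := by
  induction k with
  | zero => simp
  | succ k ih =>
    conv_lhs => rw [ih, hX]
    rw [pow_succ, pow_succ']
    simp only [Matrix.mul_assoc]

section SpecRad

variable {ι : Type} [Fintype ι] [DecidableEq ι]

theorem norm_le_specRad_of_isRoot (M : Matrix ι ι ℝ)
    {μ : ℂ} (hμ : (M.map (Complex.ofReal ·)).charpoly.IsRoot μ) : ‖μ‖ ≤ specRad M := by
  refine le_csSup ?_ ⟨μ, hμ, rfl⟩
  have hroots : {μ : ℂ | (M.map (Complex.ofReal ·)).charpoly.IsRoot μ}.Finite :=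
    Polynomial.finite_setOfPred_isRoot (Matrix.charpoly_monic _).ne_zero
  refine (hroots.image (‖·‖)).bddAbove.mono ?_
  rintro _ ⟨ν, hν, rfl⟩
  exact ⟨ν, hν, rfl⟩

theorem spectralRadius_map_ofReal_le_specRad (M : Matrix ι ι ℝ) :
    spectralRadius ℂ (M.map (Complex.ofReal ·)) ≤ ENNReal.ofReal (specRad M) := by
  refine iSup₂_le fun μ hμ => ?_
  rw [Matrix.mem_spectrum_iff_isRoot_charpoly] at hμ
  rw [← ENNReal.ofReal_coe_nnreal, coe_nnnorm]
  exact ENNReal.ofReal_le_ofReal (norm_le_specRad_of_isRoot M hμ)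

theorem specRad_transpose (M : Matrix ι ι ℝ) :
    specRad Mᵀ = specRad M := by
  simp only [specRad, Matrix.transpose_map, Matrix.charpoly_transpose]

theorem tendsto_pow_map_ofReal_of_specRad_lt_one {M : Matrix ι ι ℝ} (hM : specRad M < 1) :
    Tendsto (fun k : ℕ => M.map (Complex.ofReal ·) ^ k) atTop (𝓝 0) := by
  let _ := Matrix.linftyOpNormedRing (n := ι) (α := ℂ)
  let _ := Matrix.linftyOpNormedAlgebra (n := ι) (R := ℂ) (α := ℂ)
  refine tendsto_pow_atTop_nhds_zero_of_spectralRadius_lt_one ?_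
  calc spectralRadius ℂ (M.map (Complex.ofReal ·)) ≤ ENNReal.ofReal (specRad M) :=
        spectralRadius_map_ofReal_le_specRad M
    _ < 1 := by rwa [ENNReal.ofReal_lt_one]

theorem eq_zero_of_eq_transpose_mul_mul_of_specRad_lt_one {κ : Type} [Fintype κ] [DecidableEq κ]
    {M : Matrix ι ι ℝ} {N : Matrix κ κ ℝ} {X : Matrix ι κ ℝ}
    (hM : specRad M < 1) (hN : specRad N < 1) (hX : X = Mᵀ * X * N) : X = 0 := by
  set c : ℝ →+* ℂ := Complex.ofRealHom
  have hXc : X.map c = Mᵀ.map c * X.map c * N.map c := by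
    conv_lhs => rw [hX, Matrix.map_mul, Matrix.map_mul]
  have hMt := tendsto_pow_map_ofReal_of_specRad_lt_one (M := Mᵀ) (by rwa [specRad_transpose])
  have hNt := tendsto_pow_map_ofReal_of_specRad_lt_one hN
  have hmul : Continuous fun p : Matrix ι ι ℂ × Matrix κ κ ℂ => p.1 * X.map c * p.2 :=
    (continuous_fst.matrix_mul continuous_const).matrix_mul continuous_snd
  have hlim : Tendsto (fun k : ℕ => Mᵀ.map c ^ k * X.map c * N.map c ^ k) atTop (𝓝 0) := by
    convert (hmul.tendsto (0, 0)).comp (hMt.prodMk_nhds hNt) using 2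
    · rfl
    · simp
  have hXc0 : X.map c = 0 :=
    tendsto_nhds_unique (tendsto_const_nhds.congr (eq_pow_mul_mul_pow_of_eq_mul_mul hXc)) hlim
  exact Matrix.map_injective Complex.ofRealHom.injective (hXc0.trans (Matrix.map_zero _ rfl).symm)

end SpecRad

theorem stmt_10 {n m d : ℕ}
    (A : Matrix (Fin n) (Fin n) ℝ) (B : Matrix (Fin n) (Fin m) ℝ)
    (C : Matrix (Fin d) (Fin n) ℝ) (Kstar : Matrix (Fin m) (Fin n) ℝ)
    (L : Matrix (Fin n) (Fin d) ℝ)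
    (S11 S12 : Matrix (Fin n) (Fin n) ℝ) (R : Matrix (Fin m) (Fin m) ℝ)
    (hS11 : S11ᵀ = S11) (hR : Rᵀ = R)
    (hopt : R * Kstar = Bᵀ * S11 * (A - B * Kstar))
    (hρK : specRad (A - B * Kstar) < 1) (hρL : specRad (A - L * C) < 1)
    (hS12 : S12 = -(Kstarᵀ * R * Kstar) + (A - B * Kstar)ᵀ * S11 * (B * Kstar) +
              (A - B * Kstar)ᵀ * S12 * (A - L * C)) :
    S12 = 0 := by
  have hgain : Kstarᵀ * R = (A - B * Kstar)ᵀ * S11 * B := by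
    simpa only [transpose_mul, transpose_transpose, hR, hS11, Matrix.mul_assoc]
      using congrArg transpose hopt
  have hcancel : Kstarᵀ * R * Kstar = (A - B * Kstar)ᵀ * S11 * (B * Kstar) := by
    rw [hgain, Matrix.mul_assoc _ B]
  rw [hcancel, neg_add_cancel, zero_add] at hS12
  exact eq_zero_of_eq_transpose_mul_mul_of_specRad_lt_one hρK hρL hS12
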